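/- For every x > 0 and every compactly supported smooth ψ : ℝ → ℂ, ∫ (|ψ'(v)|² + (v²/(2√(x²+v²)) - 1/(√2 (x²+v²)^{1/4}))|ψ(v)|²) dv ≥ -(1/(4x²)) ∫ |ψ(v)|² dv. -/

import Mathlib

open MeasureTheory

/-- Integral of the derivative of a compactly supported `C¹` function over `ℝ` is zero. -/
private lemma integral_hasDerivAt_eq_zero {F F' : ℝ → ℝ}
    (hF : ∀ v, HasDerivAt F (F' v) v) (hF' : Continuous F')
    (hFc : HasCompactSupport F) : ∫ v : ℝ, F' v = 0 := by
  have hderiv : deriv F = F' := funext fun v => (hF v).deriv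
  have hcd : ContDiff ℝ 1 F := contDiff_one_iff_deriv.mpr
    ⟨fun v => (hF v).differentiableAt, hderiv ▸ hF'⟩
  have hint : Integrable F' := hF'.integrable_of_hasCompactSupport (hderiv ▸ hFc.deriv)
  have h1 := hFc.integral_Iic_deriv_eq hcd (0:ℝ)
  have h2 := hFc.integral_Ioi_deriv_eq hcd (0:ℝ)
  rw [← hderiv]
  rw [← intervalIntegral.integral_Iic_add_Ioi (b := (0:ℝ)) ((hderiv ▸ hint).integrableOn)
    ((hderiv ▸ hint).integrableOn), h1, h2]
  ring

/-- The superpotential `g(v) = v/(√2 (x²+v²)^{1/4}) - v/(4(x²+v²))`. -/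
private noncomputable def Gg (x v : ℝ) : ℝ :=
  Real.sqrt 2 / 2 * (v * (x ^ 2 + v ^ 2) ^ (-(1 : ℝ) / 4)) - v / (4 * (x ^ 2 + v ^ 2))

/-- The derivative of `Gg`. -/
private noncomputable def Gg' (x v : ℝ) : ℝ :=
  Real.sqrt 2 / 2 * ((x ^ 2 + v ^ 2) ^ (-(1 : ℝ) / 4)
      - v ^ 2 / 2 * (x ^ 2 + v ^ 2) ^ (-(5 : ℝ) / 4))
    - (x ^ 2 - v ^ 2) / (4 * (x ^ 2 + v ^ 2) ^ 2)

private lemma hasDerivAt_Gg (x : ℝ) (hx : 0 < x) (v : ℝ) :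
    HasDerivAt (Gg x) (Gg' x v) v := by
  have hw : 0 < x ^ 2 + v ^ 2 := by positivity
  have hwd : HasDerivAt (fun v : ℝ => x ^ 2 + v ^ 2) (2 * v) v := by
    simpa using (hasDerivAt_pow 2 v).const_add (x ^ 2)
  have h1 : HasDerivAt (fun v : ℝ => (x ^ 2 + v ^ 2) ^ (-(1 : ℝ) / 4))
      (2 * v * (-(1 : ℝ) / 4) * (x ^ 2 + v ^ 2) ^ (-(1 : ℝ) / 4 - 1)) v :=
    hwd.rpow_const (Or.inl hw.ne')
  have h2 : HasDerivAt (fun v : ℝ => v * (x ^ 2 + v ^ 2) ^ (-(1 : ℝ) / 4))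
      (1 * (x ^ 2 + v ^ 2) ^ (-(1 : ℝ) / 4) +
        v * (2 * v * (-(1 : ℝ) / 4) * (x ^ 2 + v ^ 2) ^ (-(1 : ℝ) / 4 - 1))) v :=
    (hasDerivAt_id v).mul h1
  have h3 : HasDerivAt (fun v : ℝ => v / (4 * (x ^ 2 + v ^ 2)))
      ((1 * (4 * (x ^ 2 + v ^ 2)) - v * (4 * (2 * v))) / (4 * (x ^ 2 + v ^ 2)) ^ 2) v :=
    (hasDerivAt_id v).div (hwd.const_mul 4) (by positivity)
  have := ((h2.const_mul (Real.sqrt 2 / 2)).sub h3)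
  convert this using 1
  · rfl
  · rfl
  · rfl
  unfold Gg'
  have he : (-(1 : ℝ) / 4 - 1) = (-(5:ℝ)/4) := by norm_num
  rw [he]
  have h54 : (x ^ 2 + v ^ 2) ^ (-(5:ℝ)/4) = ((x ^ 2 + v ^ 2) ^ ((5:ℝ)/4))⁻¹ := by
    rw [← Real.rpow_neg hw.le]; norm_num
  field_simp
  ring

private lemma alg (s a v x : ℝ) (hs : s ^ 2 = 2) (ha : 0 < a) (hx : 0 < x)
    (hw : a ^ 4 = x ^ 2 + v ^ 2) :
    (s / 2 * (v * a⁻¹) - v / (4 * a ^ 4)) ^ 2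
        - (s / 2 * (a⁻¹ - v ^ 2 / 2 * (a ^ 5)⁻¹) - (x ^ 2 - v ^ 2) / (4 * (a ^ 4) ^ 2))
      ≤ v ^ 2 / (2 * a ^ 2) - s / 2 * a⁻¹ + 1 / (4 * x ^ 2) := by
  have ha' : a ≠ 0 := ha.ne'
  have hx' : x ≠ 0 := hx.ne'
  have key : (s / 2 * (v * a⁻¹) - v / (4 * a ^ 4)) ^ 2
        - (s / 2 * (a⁻¹ - v ^ 2 / 2 * (a ^ 5)⁻¹) - (x ^ 2 - v ^ 2) / (4 * (a ^ 4) ^ 2))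
        - (v ^ 2 / (2 * a ^ 2) - s / 2 * a⁻¹)
      = (4 * x ^ 2 - 3 * v ^ 2) / (16 * (a ^ 4) ^ 2) := by
    field_simp
    ring_nf
    linear_combination (256 * a ^ 6 * v ^ 2) * hs
  have hq : (4 * x ^ 2 - 3 * v ^ 2) / (16 * (a ^ 4) ^ 2) ≤ 1 / (4 * x ^ 2) := by
    rw [div_le_div_iff₀ (by positivity) (by positivity), hw]
    nlinarith [sq_nonneg v, sq_nonneg x, sq_nonneg (v*x), sq_nonneg (v^2)]
  linarith

/-- The pointwise bound `g² - g' ≤ V + 1/(4x²)`. -/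
private lemma key_ineq (x : ℝ) (hx : 0 < x) (v : ℝ) :
    Gg x v ^ 2 - Gg' x v ≤
      (v ^ 2 / (2 * Real.sqrt (x ^ 2 + v ^ 2))
        - 1 / (Real.sqrt 2 * (x ^ 2 + v ^ 2) ^ ((1 : ℝ) / 4))) + 1 / (4 * x ^ 2) := by
  have hw : 0 < x ^ 2 + v ^ 2 := by positivity
  set a := (x ^ 2 + v ^ 2) ^ ((1 : ℝ) / 4) with hadef
  have ha : 0 < a := Real.rpow_pos_of_pos hw _
  have ha4 : a ^ 4 = x ^ 2 + v ^ 2 := by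
    rw [hadef, ← Real.rpow_natCast ((x ^ 2 + v ^ 2) ^ ((1:ℝ)/4)) 4, ← Real.rpow_mul hw.le]
    norm_num
  have ha5 : a ^ 5 = (x ^ 2 + v ^ 2) ^ ((5:ℝ)/4) := by
    rw [hadef, ← Real.rpow_natCast ((x ^ 2 + v ^ 2) ^ ((1:ℝ)/4)) 5, ← Real.rpow_mul hw.le]
    norm_num
  have h14 : (x ^ 2 + v ^ 2) ^ (-(1:ℝ)/4) = a⁻¹ := by
    rw [show (-(1:ℝ)/4) = -((1:ℝ)/4) by norm_num, Real.rpow_neg hw.le, hadef]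
  have h54 : (x ^ 2 + v ^ 2) ^ (-(5:ℝ)/4) = (a ^ 5)⁻¹ := by
    rw [show (-(5:ℝ)/4) = -((5:ℝ)/4) by norm_num, Real.rpow_neg hw.le, ha5]
  have hsq : Real.sqrt (x ^ 2 + v ^ 2) = a ^ 2 := by
    rw [hadef, ← Real.rpow_natCast ((x ^ 2 + v ^ 2) ^ ((1:ℝ)/4)) 2, ← Real.rpow_mul hw.le,
      Real.sqrt_eq_rpow]
    norm_num
  have hs2 : Real.sqrt 2 ^ 2 = 2 := Real.sq_sqrt (by norm_num)
  have hs2pos : (0:ℝ) < Real.sqrt 2 := Real.sqrt_pos.mpr (by norm_num)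
  have hinv : 1 / (Real.sqrt 2 * a) = Real.sqrt 2 / 2 * a⁻¹ := by
    rw [div_eq_iff (by positivity)]
    field_simp
    linear_combination (-1) * hs2
  unfold Gg Gg'
  rw [h14, h54, hsq, hinv, ← ha4]
  exact alg (Real.sqrt 2) a v x hs2 ha hx ha4

/-- The fiber operator bound `H_u ≥ -1/(4u²)`, at the level of quadratic forms:
for `H_x = -∂_v² + v²/(2√(x²+v²)) - 1/(√2 (x²+v²)^{1/4})` on `L²(ℝ,dv)`. -/
theorem fiber_operator_lower_bound (x : ℝ) (hx : 0 < x)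
    (ψ : ℝ → ℂ) (hψ : ContDiff ℝ (⊤ : ℕ∞) ψ) (hψc : HasCompactSupport ψ) :
    -(1 / (4 * x ^ 2)) * ∫ v : ℝ, ‖ψ v‖ ^ 2 ≤
      ∫ v : ℝ, (‖deriv ψ v‖ ^ 2 +
        (v ^ 2 / (2 * Real.sqrt (x ^ 2 + v ^ 2))
          - 1 / (Real.sqrt 2 * (x ^ 2 + v ^ 2) ^ ((1 : ℝ) / 4))) * ‖ψ v‖ ^ 2) := by
  set V : ℝ → ℝ := fun v => v ^ 2 / (2 * Real.sqrt (x ^ 2 + v ^ 2))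
    - 1 / (Real.sqrt 2 * (x ^ 2 + v ^ 2) ^ ((1 : ℝ) / 4)) with hVdef
  set B : ℝ → ℝ := fun v => ‖ψ v‖ ^ 2 with hBdef
  set A : ℝ → ℝ := fun v => ‖deriv ψ v‖ ^ 2 with hAdef
  set B' : ℝ → ℝ := fun v => 2 * (deriv ψ v * (starRingEnd ℂ) (ψ v)).re with hB'def
  have hψcont : Continuous ψ := hψ.continuous
  have hψ'cont : Continuous (deriv ψ) := hψ.continuous_deriv (by simp)
  have hψd : ∀ v, HasDerivAt ψ (deriv ψ v) v := fun v =>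
    ((hψ.differentiable (by simp)) v).hasDerivAt
  have hwc : Continuous (fun v : ℝ => x ^ 2 + v ^ 2) := by fun_prop
  have hwpos : ∀ v : ℝ, 0 < x ^ 2 + v ^ 2 := fun v => by positivity
  -- derivative of B
  have hB : ∀ v, HasDerivAt B (B' v) v := by
    intro v
    have hre : HasDerivAt (fun v => (ψ v).re) ((deriv ψ v).re) v :=
      (Complex.reCLM.hasFDerivAt.comp_hasDerivAt v (hψd v))
    have him : HasDerivAt (fun v => (ψ v).im) ((deriv ψ v).im) v :=
      (Complex.imCLM.hasFDerivAt.comp_hasDerivAt v (hψd v))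
    have hnorm : B = fun v => (ψ v).re ^ 2 + (ψ v).im ^ 2 := by
      funext v
      simp [hBdef, Complex.sq_norm, Complex.normSq_apply]
      ring
    rw [hnorm]
    convert (hre.pow 2).add (him.pow 2) using 1
    · rfl
    · rfl
    · rfl
    simp [hB'def, Complex.mul_re]
    ring
  -- continuity
  have hBcont : Continuous B := by fun_prop
  have hAcont : Continuous A := by
    rw [hAdef]; fun_prop
  have hB'cont : Continuous B' := by
    rw [hB'def]; fun_prop
  have hGcont : Continuous (Gg x) := continuous_iff_continuousAt.mpr fun v =>
    (hasDerivAt_Gg x hx v).differentiableAt.continuousAt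
  have hG'cont : Continuous (Gg' x) := by
    unfold Gg'
    have hc1 : Continuous (fun v : ℝ => (x ^ 2 + v ^ 2) ^ (-(1:ℝ)/4)) :=
      hwc.rpow_const (fun v => Or.inl (hwpos v).ne')
    have hc5 : Continuous (fun v : ℝ => (x ^ 2 + v ^ 2) ^ (-(5:ℝ)/4)) :=
      hwc.rpow_const (fun v => Or.inl (hwpos v).ne')
    apply Continuous.sub
    · fun_prop
    · apply Continuous.div (by fun_prop) (by fun_prop)
      intro v
      have := hwpos v
      positivity
  have hVcont : Continuous V := by
    rw [hVdef]
    have hrc : Continuous (fun v : ℝ => (x ^ 2 + v ^ 2) ^ ((1:ℝ)/4)) :=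
      hwc.rpow_const (fun v => Or.inl (hwpos v).ne')
    have hrpos : ∀ v : ℝ, 0 < (x ^ 2 + v ^ 2) ^ ((1:ℝ)/4) := fun v =>
      Real.rpow_pos_of_pos (hwpos v) _
    apply Continuous.sub
    · apply Continuous.div (by fun_prop)
        (continuous_const.mul (Real.continuous_sqrt.comp hwc))
      intro v
      have := Real.sqrt_pos.mpr (hwpos v)
      exact mul_ne_zero two_ne_zero this.ne'
    · apply Continuous.div continuous_const (continuous_const.mul hrc)
      intro v
      have h1 := hrpos v
      have h2 : (0:ℝ) < Real.sqrt 2 := Real.sqrt_pos.mpr (by norm_num)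
      exact mul_ne_zero h2.ne' h1.ne'
  -- compact supports
  have hBc : HasCompactSupport B := by
    have := hψc.comp_left (g := fun z : ℂ => ‖z‖ ^ 2) (by simp)
    simpa [hBdef, Function.comp_def] using this
  have hAc : HasCompactSupport A := by
    have := (hψc.deriv (𝕜 := ℝ)).comp_left (g := fun z : ℂ => ‖z‖ ^ 2) (by simp)
    simpa [hAdef, Function.comp_def] using this
  have hB'c : HasCompactSupport B' := by
    have h1 : HasCompactSupport (fun v => deriv ψ v * (starRingEnd ℂ) (ψ v)) :=
      (hψc.deriv (𝕜 := ℝ)).mul_right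
    exact h1.comp_left (g := fun z : ℂ => 2 * z.re) (by simp)
  -- integrability
  have iA : Integrable A := hAcont.integrable_of_hasCompactSupport hAc
  have iB : Integrable B := hBcont.integrable_of_hasCompactSupport hBc
  have iGB' : Integrable (fun v => Gg x v * B' v) :=
    (hGcont.mul hB'cont).integrable_of_hasCompactSupport hB'c.mul_left
  have iG'B : Integrable (fun v => Gg' x v * B v) :=
    (hG'cont.mul hBcont).integrable_of_hasCompactSupport hBc.mul_left
  have iG2B : Integrable (fun v => Gg x v ^ 2 * B v) :=
    ((hGcont.pow 2).mul hBcont).integrable_of_hasCompactSupport hBc.mul_left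
  have iVB : Integrable (fun v => V v * B v) :=
    (hVcont.mul hBcont).integrable_of_hasCompactSupport hBc.mul_left
  have icB : Integrable (fun v => 1 / (4 * x ^ 2) * B v) := iB.const_mul _
  -- integration by parts: ∫ (G'B + GB') = 0
  have hIBP : ∫ v : ℝ, Gg x v * B' v = - ∫ v : ℝ, Gg' x v * B v := by
    have hF : ∀ v, HasDerivAt (fun v => Gg x v * B v)
        (Gg' x v * B v + Gg x v * B' v) v := fun v => (hasDerivAt_Gg x hx v).mul (hB v)
    have h0 : ∫ v : ℝ, (Gg' x v * B v + Gg x v * B' v) = 0 :=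
      integral_hasDerivAt_eq_zero hF
        ((hG'cont.mul hBcont).add (hGcont.mul hB'cont)) hBc.mul_left
    rw [integral_add iG'B iGB'] at h0
    linarith
  -- pointwise nonnegativity: completing the square
  have hpt : ∀ v, 0 ≤ A v + (Gg x v * B' v + Gg x v ^ 2 * B v) := by
    intro v
    set g := Gg x v
    set z := deriv ψ v
    set w := ψ v
    have e : A v + (g * B' v + g ^ 2 * B v)
        = (z.re + g * w.re) ^ 2 + (z.im + g * w.im) ^ 2 := by
      simp only [hAdef, hBdef, hB'def, Complex.sq_norm,
        Complex.normSq_apply, Complex.mul_re, Complex.conj_re, Complex.conj_im]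
      ring
    rw [e]
    positivity
  have h1 : 0 ≤ ∫ v : ℝ, (A v + (Gg x v * B' v + Gg x v ^ 2 * B v)) :=
    integral_nonneg hpt
  have ig : Integrable (fun v => Gg x v * B' v + Gg x v ^ 2 * B v) := iGB'.add iG2B
  rw [integral_add iA ig, integral_add iGB' iG2B, hIBP] at h1
  -- h1 : 0 ≤ ∫ A + (-∫ G'B + ∫ G²B)
  have h2 : ∫ v : ℝ, (Gg x v ^ 2 - Gg' x v) * B v
      = (∫ v : ℝ, Gg x v ^ 2 * B v) - ∫ v : ℝ, Gg' x v * B v := by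
    rw [← integral_sub iG2B iG'B]
    congr 1 with v
    ring
  have h3 : ∫ v : ℝ, (Gg x v ^ 2 - Gg' x v) * B v
      ≤ ∫ v : ℝ, (V v * B v + 1 / (4 * x ^ 2) * B v) := by
    apply integral_mono (((hGcont.pow 2).sub hG'cont).mul hBcont
      |>.integrable_of_hasCompactSupport hBc.mul_left) (iVB.add icB)
    intro v
    have hk := key_ineq x hx v
    have hBnn : 0 ≤ B v := by rw [hBdef]; positivity
    have := mul_le_mul_of_nonneg_right hk hBnn
    calc (Gg x v ^ 2 - Gg' x v) * B v ≤ (V v + 1 / (4 * x ^ 2)) * B v := this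
      _ = V v * B v + 1 / (4 * x ^ 2) * B v := by ring
  rw [integral_add iVB icB, integral_const_mul] at h3
  rw [show (fun v : ℝ => ‖deriv ψ v‖ ^ 2 + (v ^ 2 / (2 * Real.sqrt (x ^ 2 + v ^ 2))
      - 1 / (Real.sqrt 2 * (x ^ 2 + v ^ 2) ^ ((1 : ℝ) / 4))) * ‖ψ v‖ ^ 2)
    = fun v : ℝ => A v + V v * B v from rfl]
  rw [integral_add iA iVB]
  have hBint : ∫ v : ℝ, ‖ψ v‖ ^ 2 = ∫ v : ℝ, B v := rfl
  rw [hBint]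
  linarith
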